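/- Let G be a connected graph and F a finite set of automorphisms of G. Given a measure μ on G, define μ_F(v) = Σ_{σ∈F} μ(σ(v)). Then for every k ≥ 0, C_{μ_F}^k ≤ C_μ^k, and consequently C_{μ_F} ≤ C_μ. -/

import Mathlib

/-!
Automorphisms are isometries of the path metric, so the `μ_F`-measure of a ball `B(v, r)` is
`∑ σ ∈ F, μ(B(σ v, r))`. The ratio defining `C_{μ_F}^k` at `v` is therefore a mediant of the
ratios defining `C_μ^k` at the points `σ v`, and a mediant never exceeds the largest of its ratios.
-/

open scoped ENNReal

/-- The μ-measure (in `ℝ≥0∞`) of the closed ball of center `v` and natural radius `k`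
in the path metric of `G`. -/
noncomputable def graphBallMeasure {V : Type*} (G : SimpleGraph V) (μ : V → ℝ≥0∞)
    (v : V) (k : ℕ) : ℝ≥0∞ :=
  ∑' w : {w : V // G.dist v w ≤ k}, μ w

/-- The restricted doubling constant `C_μ^k = sup_v μ(B(v,2k+1))/μ(B(v,k))`. -/
noncomputable def restrictedDoubling {V : Type*} (G : SimpleGraph V) (μ : V → ℝ≥0∞)
    (k : ℕ) : ℝ≥0∞ :=
  ⨆ v : V, graphBallMeasure G μ v (2 * k + 1) / graphBallMeasure G μ v k

namespace SimpleGraph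

variable {V W : Type*} {G : SimpleGraph V} {G' : SimpleGraph W}

lemma edist_map_le (f : G →g G') (u v : V) : G'.edist (f u) (f v) ≤ G.edist u v := by
  by_cases hr : G.Reachable u v
  · obtain ⟨p, hp⟩ := hr.exists_walk_length_eq_edist
    rw [← hp, ← Walk.length_map f p]
    exact edist_le _
  · rw [edist_eq_top_of_not_reachable hr]
    exact le_top

lemma Iso.edist_eq (f : G ≃g G') (u v : V) : G'.edist (f u) (f v) = G.edist u v :=
  le_antisymm (edist_map_le f.toHom u v) (by simpa using edist_map_le f.symm.toHom (f u) (f v))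

lemma Iso.dist_eq (f : G ≃g G') (u v : V) : G'.dist (f u) (f v) = G.dist u v := by
  simp only [dist, f.edist_eq]

end SimpleGraph

lemma ENNReal.finsetSum_div_finsetSum_le {ι : Type*} (s : Finset ι) {a b : ι → ℝ≥0∞}
    {c : ℝ≥0∞} (h : ∀ i ∈ s, a i / b i ≤ c) : (∑ i ∈ s, a i) / ∑ i ∈ s, b i ≤ c := by
  rcases eq_or_ne c ⊤ with rfl | hc
  · exact le_top
  rcases eq_or_ne (∑ i ∈ s, b i) ⊤ with hb | hb
  · simp [hb]
  refine ENNReal.div_le_of_le_mul ?_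
  rw [Finset.mul_sum]
  refine Finset.sum_le_sum fun i hi => ?_
  exact (ENNReal.div_le_iff_le_mul (.inr hc) (.inl (ENNReal.sum_ne_top.mp hb i hi))).mp (h i hi)

section graphBallMeasure

variable {V : Type*} {G : SimpleGraph V}

lemma graphBallMeasure_finsetSum {ι : Type*} (s : Finset ι) (μ : ι → V → ℝ≥0∞) (v : V)
    (k : ℕ) :
    graphBallMeasure G (fun w => ∑ i ∈ s, μ i w) v k = ∑ i ∈ s, graphBallMeasure G (μ i) v k :=
  Summable.tsum_finsetSum fun _ _ => ENNReal.summable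

lemma graphBallMeasure_comp_iso (σ : G ≃g G) (μ : V → ℝ≥0∞) (v : V) (k : ℕ) :
    graphBallMeasure G (fun w => μ (σ w)) v k = graphBallMeasure G μ (σ v) k :=
  (σ.toEquiv.subtypeEquiv (p := fun w => G.dist v w ≤ k) (q := fun u => G.dist (σ v) u ≤ k)
    fun w => by simp [σ.dist_eq]).tsum_eq fun u => μ u

lemma restrictedDoubling_finsetSum_comp_iso_le (F : Finset (G ≃g G)) (μ : V → ℝ≥0∞)
    (k : ℕ) :
    restrictedDoubling G (fun v => ∑ σ ∈ F, μ (σ v)) k ≤ restrictedDoubling G μ k := by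
  refine iSup_le fun v => ?_
  simp only [graphBallMeasure_finsetSum F (fun σ w => μ (σ w)), graphBallMeasure_comp_iso]
  exact ENNReal.finsetSum_div_finsetSum_le F fun σ _ =>
    le_iSup (fun u => graphBallMeasure G μ u (2 * k + 1) / graphBallMeasure G μ u k) (σ v)

end graphBallMeasure

theorem stmt_17 {V : Type*} (G : SimpleGraph V)
    (F : Finset (G ≃g G))
    (μ : V → ℝ≥0∞) :
    (∀ k : ℕ,
      restrictedDoubling G (fun v => ∑ σ ∈ F, μ (σ v)) k ≤ restrictedDoubling G μ k) ∧
    (⨆ k : ℕ, restrictedDoubling G (fun v => ∑ σ ∈ F, μ (σ v)) k) ≤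
      ⨆ k : ℕ, restrictedDoubling G μ k :=
  ⟨restrictedDoubling_finsetSum_comp_iso_le F μ,
    iSup_mono (restrictedDoubling_finsetSum_comp_iso_le F μ)⟩
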